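/- Under the penalty comparison inequality 0 ≥ ⟨∇f(Φ⁰), Δ⟩ + β‖Δ‖² + (1/ν₁)‖Δ_{S^c}‖₁ - (1/ν₀)‖Δ_S‖₁ with ‖∇f(Φ⁰)‖_∞ ≤ γ and 1/ν₁ > 2γ, the error Δ lies in the cone ‖Δ_{S^c}‖₁ ≤ α‖Δ_S‖₁ with α = (1/ν₀ + γ)/(1/ν₁ - γ) ≤ 1 + 2ν₁/ν₀. -/

import Mathlib

open Finset

/-! The gradient term is controlled by Hölder, `|⟨g, Δ⟩| ≤ γ ‖Δ‖₁`, and `‖Δ‖₁` splits over `S` and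
`Sᶜ`; the penalty inequality then becomes `(1/ν₁ - γ) ‖Δ_{Sᶜ}‖₁ ≤ (1/ν₀ + γ) ‖Δ_S‖₁`. Cleared of
denominators, the bound on the cone constant reduces to `2γ < 1/ν₁` and its multiple `2ν₁γ/ν₀ < 1/ν₀`. -/

theorem abs_sum_mul_le_mul_sum_abs {ι : Type*} [Fintype ι] (g Δ : ι → ℝ) {γ : ℝ}
    (hg : ∀ i, |g i| ≤ γ) : |∑ i, g i * Δ i| ≤ γ * ∑ i, |Δ i| :=
  calc |∑ i, g i * Δ i| ≤ ∑ i, |g i| * |Δ i| := by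
        simpa only [abs_mul] using abs_sum_le_sum_abs (fun i => g i * Δ i) univ
    _ ≤ ∑ i, γ * |Δ i| := by gcongr with i; exact hg i
    _ = γ * ∑ i, |Δ i| := (mul_sum _ _ _).symm

theorem mul_sum_compl_abs_le_of_penalty_ineq {ι : Type*} [Fintype ι] [DecidableEq ι]
    (g Δ : ι → ℝ) (s : Finset ι) {γ q c₀ c₁ : ℝ} (hq : 0 ≤ q) (hg : ∀ i, |g i| ≤ γ)
    (hpen : 0 ≥ (∑ i, g i * Δ i) + q + c₁ * ∑ i ∈ sᶜ, |Δ i| - c₀ * ∑ i ∈ s, |Δ i|) :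
    (c₁ - γ) * ∑ i ∈ sᶜ, |Δ i| ≤ (c₀ + γ) * ∑ i ∈ s, |Δ i| := by
  have hholder := neg_le_of_abs_le (abs_sum_mul_le_mul_sum_abs g Δ hg)
  rw [← sum_add_sum_compl s] at hholder
  linarith

theorem cone_constant_le {γ ν₀ ν₁ : ℝ} (hν₀ : 0 < ν₀) (hν₁ : 0 < ν₁) (hν : 1 / ν₁ > 2 * γ) :
    (1 / ν₀ + γ) / (1 / ν₁ - γ) ≤ 1 + 2 * ν₁ / ν₀ := by
  have hγν₁ : 2 * γ * ν₁ < 1 := (lt_div_iff₀ hν₁).mp hν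
  have hγν₀ : 2 * ν₁ * γ / ν₀ < 1 / ν₀ := by
    rw [div_lt_div_iff_of_pos_right hν₀]; linarith
  rw [div_le_iff₀ (by linarith [one_div_pos.mpr hν₁])]
  have hexpand : (1 + 2 * ν₁ / ν₀) * (1 / ν₁ - γ) = 1 / ν₁ - γ + 2 / ν₀ - 2 * ν₁ * γ / ν₀ := by
    field_simp; ring
  rw [hexpand, show 2 / ν₀ = 1 / ν₀ + 1 / ν₀ by ring]
  linarith

theorem cone_condition_of_penalty_ineq_general (d : ℕ)
    (Δ g : Fin d → ℝ) (S : Finset (Fin d)) (β γ ν₀ ν₁ : ℝ)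
    (hβ : 0 ≤ β) (hν₀ : 0 < ν₀) (hν₁ : 0 < ν₁)
    (hsup : ∀ i, |g i| ≤ γ)
    (hpen : 0 ≥ (∑ i, g i * Δ i) + β * ∑ i, (Δ i) ^ 2
        + (1 / ν₁) * ∑ i ∈ Sᶜ, |Δ i| - (1 / ν₀) * ∑ i ∈ S, |Δ i|)
    (hν : 1 / ν₁ > 2 * γ) :
    (∑ i ∈ Sᶜ, |Δ i|) ≤ ((1 / ν₀ + γ) / (1 / ν₁ - γ)) * ∑ i ∈ S, |Δ i| ∧
    (1 / ν₀ + γ) / (1 / ν₁ - γ) ≤ 1 + 2 * ν₁ / ν₀ := by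
  have hquad : 0 ≤ β * ∑ i, (Δ i) ^ 2 := mul_nonneg hβ (sum_nonneg fun i _ => sq_nonneg _)
  have hcone := mul_sum_compl_abs_le_of_penalty_ineq g Δ S hquad hsup hpen
  have hden : 0 < 1 / ν₁ - γ := by linarith [one_div_pos.mpr hν₁]
  refine ⟨?_, cone_constant_le hν₀ hν₁ hν⟩
  rw [div_mul_eq_mul_div, le_div_iff₀ hden, mul_comm]
  exact hcone

theorem cone_condition_of_penalty_ineq (d : ℕ) (f : (Fin d → ℝ) → ℝ)
    (Φ Δ g : Fin d → ℝ) (S : Finset (Fin d)) (β γ ν₀ ν₁ : ℝ)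
    (hβ : 0 ≤ β) (hγ : 0 ≤ γ) (hν₀ : 0 < ν₀) (hν₁ : 0 < ν₁)
    (hgrad : ∀ v : Fin d → ℝ, fderiv ℝ f Φ v = ∑ i, g i * v i)
    (hsup : ∀ i, |g i| ≤ γ)
    (hpen : 0 ≥ (∑ i, g i * Δ i) + β * ∑ i, (Δ i) ^ 2
        + (1 / ν₁) * ∑ i ∈ Sᶜ, |Δ i| - (1 / ν₀) * ∑ i ∈ S, |Δ i|)
    (hν : 1 / ν₁ > 2 * γ) :
    (∑ i ∈ Sᶜ, |Δ i|) ≤ ((1 / ν₀ + γ) / (1 / ν₁ - γ)) * ∑ i ∈ S, |Δ i| ∧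
    (1 / ν₀ + γ) / (1 / ν₁ - γ) ≤ 1 + 2 * ν₁ / ν₀ :=
  cone_condition_of_penalty_ineq_general d Δ g S β γ ν₀ ν₁ hβ hν₀ hν₁ hsup hpen hν
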